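/- For every n ≥ 1 and every permutation τ: the number of alternating involutions of length 2n avoiding τ equals the number of alternating involutions of length 2n avoiding τ^{rc}; the number of reverse alternating involutions of length 2n avoiding τ equals the number of reverse alternating involutions of length 2n avoiding τ^{rc}; and the number of alternating involutions of length 2n+1 avoiding τ equals the number of reverse alternating involutions of length 2n+1 avoiding τ^{rc}. -/
import Mathlib


/-- `π` contains the pattern `σ`: there is a strictly increasing choice of positions
on which `π` is order isomorphic to `σ`. -/
def PermContains {n k : ℕ} (π : Equiv.Perm (Fin n)) (σ : Equiv.Perm (Fin k)) : Prop :=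
  ∃ f : Fin k → Fin n, StrictMono f ∧ ∀ a b : Fin k, σ a < σ b ↔ π (f a) < π (f b)

/-- `π` avoids the pattern `σ`. -/
def PermAvoids {n k : ℕ} (π : Equiv.Perm (Fin n)) (σ : Equiv.Perm (Fin k)) : Prop :=
  ¬ PermContains π σ

/-- `π` is alternating: `π(1) < π(2) > π(3) < π(4) > ⋯` (1-based), phrased with
0-based indices: ascent at even `i`, descent at odd `i`. -/
def IsAlternating {n : ℕ} (π : Equiv.Perm (Fin n)) : Prop :=
  ∀ i : ℕ, ∀ h : i + 1 < n,
    (Even i → π ⟨i, by omega⟩ < π ⟨i + 1, h⟩) ∧ (Odd i → π ⟨i + 1, h⟩ < π ⟨i, by omega⟩)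

/-- `π` is reverse alternating: `π(1) > π(2) < π(3) > π(4) < ⋯` (1-based), phrased with
0-based indices: descent at even `i`, ascent at odd `i`. -/
def IsRevAlternating {n : ℕ} (π : Equiv.Perm (Fin n)) : Prop :=
  ∀ i : ℕ, ∀ h : i + 1 < n,
    (Even i → π ⟨i + 1, h⟩ < π ⟨i, by omega⟩) ∧ (Odd i → π ⟨i, by omega⟩ < π ⟨i + 1, h⟩)

/-- The reverse-complement of a permutation: `π^{rc}(i) = n + 1 - π(n + 1 - i)`
(1-based), i.e. `j ↦ rev (π (rev j))` with 0-based indices. -/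
noncomputable def rcPerm {n : ℕ} (π : Equiv.Perm (Fin n)) : Equiv.Perm (Fin n) :=
  (Fin.revPerm.trans π).trans Fin.revPerm

lemma rcPerm_apply {N : ℕ} (π : Equiv.Perm (Fin N)) (j : Fin N) :
    rcPerm π j = (π j.rev).rev := rfl

lemma rcPerm_rcPerm {N : ℕ} (π : Equiv.Perm (Fin N)) : rcPerm (rcPerm π) = π := by
  ext j
  simp [rcPerm_apply, Fin.rev_rev]

lemma rcPerm_inv {N : ℕ} (π : Equiv.Perm (Fin N)) (h : π⁻¹ = π) :
    (rcPerm π)⁻¹ = rcPerm π := by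
  have hmul : π * π = 1 := by
    nth_rewrite 1 [← h]
    simp
  have key : ∀ x : Fin N, π (π x) = x := by
    intro x
    rw [← Equiv.Perm.mul_apply, hmul]
    rfl
  rw [inv_eq_iff_mul_eq_one]
  ext j
  simp [Equiv.Perm.mul_apply, rcPerm_apply, Fin.rev_rev, key]

lemma rev_mk {N i : ℕ} (hi : i < N) :
    (⟨i, hi⟩ : Fin N).rev = ⟨N - (i + 1), by omega⟩ := by
  ext
  simp [Fin.val_rev]

lemma contains_rc {N k : ℕ} (π : Equiv.Perm (Fin N)) (σ : Equiv.Perm (Fin k))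
    (h : PermContains π σ) : PermContains (rcPerm π) (rcPerm σ) := by
  obtain ⟨f, hf, hiff⟩ := h
  refine ⟨fun a => (f a.rev).rev, ?_, ?_⟩
  · intro a b hab
    exact Fin.rev_lt_rev.mpr (hf (Fin.rev_lt_rev.mpr hab))
  · intro a b
    simp only [rcPerm_apply, Fin.rev_rev, Fin.rev_lt_rev]
    exact hiff b.rev a.rev

lemma avoids_rc {N k : ℕ} {π : Equiv.Perm (Fin N)} {σ : Equiv.Perm (Fin k)}
    (h : PermAvoids π σ) : PermAvoids (rcPerm π) (rcPerm σ) := by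
  intro hc
  have := contains_rc _ _ hc
  rw [rcPerm_rcPerm, rcPerm_rcPerm] at this
  exact h this

lemma rc_lt_iff {N : ℕ} (π : Equiv.Perm (Fin N)) {i : ℕ} (hi : i + 1 < N) :
    (rcPerm π ⟨i, by omega⟩ < rcPerm π ⟨i + 1, hi⟩ ↔
      π ⟨N - (i + 2), by omega⟩ < π ⟨N - (i + 2) + 1, by omega⟩) := by
  rw [rcPerm_apply, rcPerm_apply, Fin.rev_lt_rev, rev_mk, rev_mk]
  constructor <;> intro h <;> convert h using 3 <;> omega

lemma alt_rc_even {N : ℕ} (hN : N % 2 = 0) {π : Equiv.Perm (Fin N)}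
    (h : IsAlternating π) : IsAlternating (rcPerm π) := by
  intro i hi
  have H := h (N - (i + 2)) (by omega)
  constructor
  · intro hev
    rw [rc_lt_iff π hi]
    exact H.1 (by rw [Nat.even_iff] at *; omega)
  · intro hodd
    rw [show rcPerm π ⟨i+1, hi⟩ < rcPerm π ⟨i, by omega⟩ ↔
        π ⟨N - (i + 2) + 1, by omega⟩ < π ⟨N - (i + 2), by omega⟩ from
      (by rw [rcPerm_apply, rcPerm_apply, Fin.rev_lt_rev, rev_mk, rev_mk]
          constructor <;> intro h' <;> convert h' using 3 <;> omega)]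
    exact H.2 (by rw [Nat.odd_iff] at *; omega)

lemma revalt_rc_even {N : ℕ} (hN : N % 2 = 0) {π : Equiv.Perm (Fin N)}
    (h : IsRevAlternating π) : IsRevAlternating (rcPerm π) := by
  intro i hi
  have H := h (N - (i + 2)) (by omega)
  constructor
  · intro hev
    rw [show rcPerm π ⟨i+1, hi⟩ < rcPerm π ⟨i, by omega⟩ ↔
        π ⟨N - (i + 2) + 1, by omega⟩ < π ⟨N - (i + 2), by omega⟩ from
      (by rw [rcPerm_apply, rcPerm_apply, Fin.rev_lt_rev, rev_mk, rev_mk]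
          constructor <;> intro h' <;> convert h' using 3 <;> omega)]
    exact H.1 (by rw [Nat.even_iff] at *; omega)
  · intro hodd
    rw [rc_lt_iff π hi]
    exact H.2 (by rw [Nat.odd_iff] at *; omega)

lemma alt_rc_odd {N : ℕ} (hN : N % 2 = 1) {π : Equiv.Perm (Fin N)}
    (h : IsAlternating π) : IsRevAlternating (rcPerm π) := by
  intro i hi
  have H := h (N - (i + 2)) (by omega)
  constructor
  · intro hev
    rw [show rcPerm π ⟨i+1, hi⟩ < rcPerm π ⟨i, by omega⟩ ↔
        π ⟨N - (i + 2) + 1, by omega⟩ < π ⟨N - (i + 2), by omega⟩ from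
      (by rw [rcPerm_apply, rcPerm_apply, Fin.rev_lt_rev, rev_mk, rev_mk]
          constructor <;> intro h' <;> convert h' using 3 <;> omega)]
    exact H.2 (by rw [Nat.even_iff, Nat.odd_iff] at *; omega)
  · intro hodd
    rw [rc_lt_iff π hi]
    exact H.1 (by rw [Nat.even_iff, Nat.odd_iff] at *; omega)

lemma revalt_rc_odd {N : ℕ} (hN : N % 2 = 1) {π : Equiv.Perm (Fin N)}
    (h : IsRevAlternating π) : IsAlternating (rcPerm π) := by
  intro i hi
  have H := h (N - (i + 2)) (by omega)
  constructor
  · intro hev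
    rw [rc_lt_iff π hi]
    exact H.2 (by rw [Nat.even_iff, Nat.odd_iff] at *; omega)
  · intro hodd
    rw [show rcPerm π ⟨i+1, hi⟩ < rcPerm π ⟨i, by omega⟩ ↔
        π ⟨N - (i + 2) + 1, by omega⟩ < π ⟨N - (i + 2), by omega⟩ from
      (by rw [rcPerm_apply, rcPerm_apply, Fin.rev_lt_rev, rev_mk, rev_mk]
          constructor <;> intro h' <;> convert h' using 3 <;> omega)]
    exact H.1 (by rw [Nat.even_iff, Nat.odd_iff] at *; omega)

/-- The rc bijection between avoiders, packaged as an equivalence of subtypes. -/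
noncomputable def rcEquiv {N m : ℕ} (τ : Equiv.Perm (Fin m))
    (P Q : Equiv.Perm (Fin N) → Prop)
    (hPQ : ∀ π, P π → Q (rcPerm π)) (hQP : ∀ π, Q π → P (rcPerm π)) :
    {π : Equiv.Perm (Fin N) // π⁻¹ = π ∧ P π ∧ PermAvoids π τ} ≃
      {π : Equiv.Perm (Fin N) // π⁻¹ = π ∧ Q π ∧ PermAvoids π (rcPerm τ)} where
  toFun := fun π => ⟨rcPerm π.1, rcPerm_inv π.1 π.2.1, hPQ π.1 π.2.2.1, avoids_rc π.2.2.2⟩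
  invFun := fun π => ⟨rcPerm π.1, rcPerm_inv π.1 π.2.1, hQP π.1 π.2.2.1, by
    have := avoids_rc π.2.2.2
    rwa [rcPerm_rcPerm] at this⟩
  left_inv := fun π => Subtype.ext (rcPerm_rcPerm π.1)
  right_inv := fun π => Subtype.ext (rcPerm_rcPerm π.1)

/-- Lemma 1.5: reverse-complement gives `|AI_{2n}(τ)| = |AI_{2n}(τ^{rc})|`,
`|RAI_{2n}(τ)| = |RAI_{2n}(τ^{rc})|` and `|AI_{2n+1}(τ)| = |RAI_{2n+1}(τ^{rc})|`. -/
theorem card_avoiding_tau_eq_card_avoiding_rc (n m : ℕ) (hn : 1 ≤ n)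
    (τ : Equiv.Perm (Fin m)) :
    (Nat.card {π : Equiv.Perm (Fin (2 * n)) //
        π⁻¹ = π ∧ IsAlternating π ∧ PermAvoids π τ} =
      Nat.card {π : Equiv.Perm (Fin (2 * n)) //
        π⁻¹ = π ∧ IsAlternating π ∧ PermAvoids π (rcPerm τ)}) ∧
    (Nat.card {π : Equiv.Perm (Fin (2 * n)) //
        π⁻¹ = π ∧ IsRevAlternating π ∧ PermAvoids π τ} =
      Nat.card {π : Equiv.Perm (Fin (2 * n)) //
        π⁻¹ = π ∧ IsRevAlternating π ∧ PermAvoids π (rcPerm τ)}) ∧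
    (Nat.card {π : Equiv.Perm (Fin (2 * n + 1)) //
        π⁻¹ = π ∧ IsAlternating π ∧ PermAvoids π τ} =
      Nat.card {π : Equiv.Perm (Fin (2 * n + 1)) //
        π⁻¹ = π ∧ IsRevAlternating π ∧ PermAvoids π (rcPerm τ)}) := by
  refine ⟨Nat.card_congr (rcEquiv τ _ _ ?_ ?_),
    Nat.card_congr (rcEquiv τ _ _ ?_ ?_), Nat.card_congr (rcEquiv τ _ _ ?_ ?_)⟩
  · exact fun π h => alt_rc_even (by omega) h
  · exact fun π h => alt_rc_even (by omega) h
  · exact fun π h => revalt_rc_even (by omega) h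
  · exact fun π h => revalt_rc_even (by omega) h
  · exact fun π h => alt_rc_odd (by omega) h
  · exact fun π h => revalt_rc_odd (by omega) h
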